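/- For every unitary U in the Clifford+T group 𝒥ₙᵀ, every entry of the channel representation Û lies in the ring ℤ[1/√2] ⊂ ℝ, i.e. each entry can be written as (a + b√2)/√2^k with a, b ∈ ℤ and k ∈ ℕ. -/

import Mathlib

open Matrix Complex

/-- Length-`n` vectors over `𝔽₂`, indexing computational basis states of `n` qubits. -/
abbrev QVec (n : ℕ) := Fin n → ZMod 2

/-- Integer (here: natural number) dot product of two 0/1 vectors. -/
def dotN {n : ℕ} (a b : QVec n) : ℕ := ∑ i, (a i).val * (b i).val

/-- The `n`-qubit Pauli matrix `P_{a,b}`. -/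
noncomputable def Pauli {n : ℕ} (a b : QVec n) : Matrix (QVec n) (QVec n) ℂ :=
  fun x y => if x = y + a then Complex.I ^ dotN a b * (-1 : ℂ) ^ dotN b y else 0

/-- A `2^n × 2^n` unitary is Clifford if it maps every Pauli matrix to a
Pauli matrix up to a sign `±1`, under conjugation. -/
def IsClifford {n : ℕ} (C : Matrix (QVec n) (QVec n) ℂ) : Prop :=
  C ∈ Matrix.unitaryGroup (QVec n) ℂ ∧
    ∀ a b : QVec n, ∃ a' b' : QVec n, ∃ ε : ℂ, (ε = 1 ∨ ε = -1) ∧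
      C * Pauli a b * Cᴴ = ε • Pauli a' b'

/-- The channel representation `Û` of a `2^n × 2^n` matrix `U`:
rows/columns indexed by Pauli matrices, `Û_{rs} = (1/2^n) Tr(P_r U P_s U†)`. -/
noncomputable def chan {n : ℕ} (U : Matrix (QVec n) (QVec n) ℂ) :
    Matrix (QVec n × QVec n) (QVec n × QVec n) ℂ :=
  fun r s => ((1 : ℂ) / 2 ^ n) * Matrix.trace (Pauli r.1 r.2 * U * Pauli s.1 s.2 * Uᴴ)

/-- The gate `T ⊗ I_{2^{n-1}}`, where `T = diag(1, e^{iπ/4})` acts on the first qubit. -/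
noncomputable def Tgate (n : ℕ) : Matrix (QVec n) (QVec n) ℂ :=
  Matrix.diagonal fun x =>
    if h : 0 < n then (if x ⟨0, h⟩ = 1 then Complex.exp (Complex.I * Real.pi / 4) else 1) else 1

/-- The Clifford+T group `𝒥ₙᵀ`: the subgroup of the unitary group generated by the
Clifford unitaries together with `T ⊗ I_{2^{n-1}}`. -/
noncomputable def CliffordTGroup (n : ℕ) : Subgroup (Matrix.unitaryGroup (QVec n) ℂ) :=
  Subgroup.closure
    {u | IsClifford (u : Matrix (QVec n) (QVec n) ℂ) ∨ (u : Matrix (QVec n) (QVec n) ℂ) = Tgate n}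

/-- `R(P) = ((1+e^{iπ/4})/2) I + ((1−e^{iπ/4})/2) P`. -/
noncomputable def Rgate {n : ℕ} (P : Matrix (QVec n) (QVec n) ℂ) : Matrix (QVec n) (QVec n) ℂ :=
  ((1 + Complex.exp (Complex.I * Real.pi / 4)) / 2) • (1 : Matrix (QVec n) (QVec n) ℂ) +
    ((1 - Complex.exp (Complex.I * Real.pi / 4)) / 2) • P


noncomputable def sq2 : ℂ := ((Real.sqrt 2 : ℝ) : ℂ)

lemma sq2_mul_self : sq2 * sq2 = 2 := by
  simp only [sq2, ← Complex.ofReal_mul]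
  norm_num [Real.mul_self_sqrt]

lemma sq2_ne : sq2 ≠ 0 := by
  simp [sq2, Real.sqrt_eq_zero']

/-- membership in ℤ[√2] localized at 2 -/
def inD2 (z : ℂ) : Prop := ∃ a b : ℤ, ∃ k : ℕ, z = ((a : ℂ) + (b : ℂ) * sq2) / 2 ^ k

lemma inD2_int (a : ℤ) : inD2 (a : ℂ) := ⟨a, 0, 0, by simp⟩

lemma inD2_zero : inD2 0 := by simpa using inD2_int 0
lemma inD2_one : inD2 1 := by simpa using inD2_int 1
lemma inD2_neg_one : inD2 (-1) := by simpa using inD2_int (-1)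

lemma inD2_sqrt2_div_two : inD2 (sq2 / 2) := ⟨0, 1, 1, by norm_num⟩
lemma inD2_neg_sqrt2_div_two : inD2 (-(sq2 / 2)) := ⟨0, -1, 1, by push_cast; ring_nf⟩

lemma inD2_add {z w : ℂ} (hz : inD2 z) (hw : inD2 w) : inD2 (z + w) := by
  obtain ⟨a, b, k, rfl⟩ := hz
  obtain ⟨a', b', m, rfl⟩ := hw
  refine ⟨a * 2 ^ m + a' * 2 ^ k, b * 2 ^ m + b' * 2 ^ k, k + m, ?_⟩
  have h2 : (2 : ℂ) ≠ 0 := two_ne_zero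
  field_simp
  push_cast
  ring

lemma inD2_mul {z w : ℂ} (hz : inD2 z) (hw : inD2 w) : inD2 (z * w) := by
  obtain ⟨a, b, k, rfl⟩ := hz
  obtain ⟨a', b', m, rfl⟩ := hw
  refine ⟨a * a' + 2 * b * b', a * b' + a' * b, k + m, ?_⟩
  have h2 : (2 : ℂ) ≠ 0 := two_ne_zero
  field_simp
  push_cast
  linear_combination (b : ℂ) * b' * 2 ^ (k + m) * sq2_mul_self

lemma inD2_neg {z : ℂ} (hz : inD2 z) : inD2 (-z) := by
  have := inD2_mul inD2_neg_one hz; simpa using this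

lemma inD2_smul_pm {ε z : ℂ} (hε : ε = 1 ∨ ε = -1) (hz : inD2 z) : inD2 (ε * z) := by
  rcases hε with rfl | rfl
  · simpa using hz
  · simpa using inD2_neg hz

lemma inD2_sum {ι : Type*} (s : Finset ι) (f : ι → ℂ) (h : ∀ i ∈ s, inD2 (f i)) :
    inD2 (∑ i ∈ s, f i) := by
  classical
  induction s using Finset.induction_on with
  | empty => simpa using inD2_zero
  | insert _ _ hx ih =>
    rw [Finset.sum_insert hx]
    exact inD2_add (h _ (Finset.mem_insert_self _ _))
      (ih fun i hi => h i (Finset.mem_insert_of_mem hi))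

lemma inD2_goal {z : ℂ} (hz : inD2 z) :
    ∃ (a b : ℤ) (k : ℕ), z = ((a : ℂ) + (b : ℂ) * ((Real.sqrt 2 : ℝ) : ℂ)) / ((Real.sqrt 2 : ℝ) : ℂ) ^ k := by
  obtain ⟨a, b, k, rfl⟩ := hz
  refine ⟨a, b, 2 * k, ?_⟩
  have h : ((Real.sqrt 2 : ℝ) : ℂ) ^ (2 * k) = 2 ^ k := by
    rw [pow_mul, sq, show ((Real.sqrt 2:ℝ):ℂ) * ((Real.sqrt 2:ℝ):ℂ) = 2 from sq2_mul_self]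
  rw [h]; rfl



lemma neg_one_pow_congr' {m m' : ℕ} (h : m % 2 = m' % 2) : ((-1 : ℂ)) ^ m = (-1) ^ m' := by
  conv_lhs => rw [← Nat.div_add_mod m 2, pow_add, pow_mul]
  conv_rhs => rw [← Nat.div_add_mod m' 2, pow_add, pow_mul]
  simp [h]

lemma dotN_comm {n : ℕ} (a b : QVec n) : dotN a b = dotN b a := by
  unfold dotN; exact Finset.sum_congr rfl fun i _ => mul_comm _ _

lemma dotN_add_left_mod {n : ℕ} (a a' b : QVec n) :
    dotN (a + a') b % 2 = (dotN a b + dotN a' b) % 2 := by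
  have h : ((dotN (a + a') b : ℕ) : ZMod 2) = ((dotN a b + dotN a' b : ℕ) : ZMod 2) := by
    unfold dotN
    push_cast [ZMod.natCast_val, ZMod.cast_id]
    rw [← Finset.sum_add_distrib]
    exact Finset.sum_congr rfl fun i _ => by rw [Pi.add_apply]; ring
  exact (ZMod.natCast_eq_natCast_iff' _ _ _).mp h

noncomputable def sgn {n : ℕ} (c y : QVec n) : ℂ := (-1) ^ dotN c y

lemma sgn_add_left {n : ℕ} (c c' y : QVec n) : sgn (c + c') y = sgn c y * sgn c' y := by
  unfold sgn
  rw [← pow_add]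
  exact neg_one_pow_congr' (by rw [dotN_add_left_mod])

lemma sgn_add_right {n : ℕ} (c y y' : QVec n) : sgn c (y + y') = sgn c y * sgn c y' := by
  unfold sgn
  rw [← pow_add]
  refine neg_one_pow_congr' ?_
  rw [dotN_comm c, dotN_add_left_mod, dotN_comm y, dotN_comm y']

lemma zmod2_cases (x : ZMod 2) : x = 0 ∨ x = 1 := by revert x; decide

lemma qvec_add_self {n : ℕ} (v : QVec n) : v + v = 0 := by
  funext i
  rcases zmod2_cases (v i) with h | h <;> rw [Pi.add_apply, h, Pi.zero_apply] <;> decide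

lemma card_qvec (n : ℕ) : Fintype.card (QVec n) = 2 ^ n := by
  simp [ZMod]

lemma charSum {n : ℕ} (c : QVec n) :
    ∑ y : QVec n, sgn c y = if c = 0 then (2 ^ n : ℂ) else 0 := by
  by_cases hc : c = 0
  · subst hc
    have h1 : ∀ y : QVec n, sgn 0 y = 1 := by
      intro y; unfold sgn dotN; simp
    rw [if_pos rfl]
    simp [h1, Finset.card_univ, card_qvec]
  · rw [if_neg hc]
    obtain ⟨i, hi⟩ : ∃ i, c i ≠ 0 := by
      by_contra h; push_neg at h; exact hc (funext fun i => h i)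
    have hci : c i = 1 := (zmod2_cases (c i)).resolve_left hi
    set e : QVec n := Pi.single i 1 with he
    have key : ∑ y : QVec n, sgn c y = ∑ y : QVec n, sgn c (y + e) :=
      (Fintype.sum_equiv (Equiv.addRight e) (fun y => sgn c (y + e))
        (fun y => sgn c y) (fun x => rfl)).symm
    have hce : sgn c e = -1 := by
      unfold sgn
      have hd : dotN c e = 1 := by
        unfold dotN
        rw [Finset.sum_eq_single i]
        · rw [he]; simp [hci]; decide
        · intro j _ hj; simp [he, Pi.single_eq_of_ne hj]
        · simp
      rw [hd, pow_one]
    have hS : ∑ y : QVec n, sgn c y = -∑ y : QVec n, sgn c y := by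
      conv_lhs => rw [key]
      rw [← Finset.sum_neg_distrib]
      refine Finset.sum_congr rfl fun y _ => ?_
      rw [sgn_add_right, hce]; ring
    have h2 : (2 : ℂ) * ∑ y : QVec n, sgn c y = 0 := by
      rw [two_mul]; nth_rewrite 1 [hS]; ring
    exact (mul_eq_zero.mp h2).resolve_left two_ne_zero



lemma sgn_comm {n : ℕ} (c y : QVec n) : sgn c y = sgn y c := by
  unfold sgn; rw [dotN_comm]

lemma sgn_mul_self {n : ℕ} (c y : QVec n) : sgn c y * sgn c y = 1 := by
  unfold sgn; rw [← pow_add, ← two_mul, pow_mul]; norm_num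

lemma I_pow_mul_self (d : ℕ) : (Complex.I) ^ d * Complex.I ^ d = (-1 : ℂ) ^ d := by
  rw [← pow_add, ← two_mul, pow_mul, Complex.I_sq]

lemma neg_one_pow_mul_self (d : ℕ) : ((-1 : ℂ)) ^ d * (-1) ^ d = 1 := by
  rw [← pow_add, ← two_mul, pow_mul]; norm_num

lemma qvec_add_eq_zero_iff {n : ℕ} {u v : QVec n} : u + v = 0 ↔ v = u := by
  constructor
  · intro h
    have h2 := congrArg (fun w => u + w) h
    simpa [← add_assoc, qvec_add_self] using h2
  · rintro rfl; exact qvec_add_self _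

lemma qvec_cancel {n : ℕ} (u v : QVec n) : u + (u + v) = v := by
  rw [← add_assoc, qvec_add_self, zero_add]

lemma Pauli_zero_of {n : ℕ} {a b x y : QVec n} (h : ¬ x = y + a) : Pauli a b x y = 0 := by
  unfold Pauli; rw [if_neg h]

lemma Pauli_pos {n : ℕ} {a b x y : QVec n} (h : x = y + a) :
    Pauli a b x y = Complex.I ^ dotN a b * sgn b y := by
  unfold Pauli sgn; rw [if_pos h]

lemma trace_mul_entry {n : ℕ} (M N : Matrix (QVec n) (QVec n) ℂ) :
    Matrix.trace (M * N) = ∑ x : QVec n, ∑ y : QVec n, M x y * N y x := by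
  simp [Matrix.trace, Matrix.diag, Matrix.mul_apply]

lemma tracePP {n : ℕ} (a b a' b' : QVec n) :
    Matrix.trace (Pauli a b * Pauli a' b') =
      if a = a' ∧ b = b' then (2 ^ n : ℂ) else 0 := by
  rw [trace_mul_entry]
  have hcol : ∀ x : QVec n,
      (∑ y : QVec n, Pauli a b x y * Pauli a' b' y x) =
        Pauli a b x (x + a) * Pauli a' b' (x + a) x := by
    intro x
    refine Finset.sum_eq_single (x + a) (fun y _ hy => ?_) (by simp)
    have h0 : Pauli a b x y = 0 := by
      refine Pauli_zero_of fun h => hy ?_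
      rw [h, add_assoc, qvec_add_self, add_zero]
    rw [h0, zero_mul]
  rw [Finset.sum_congr rfl fun x _ => hcol x]
  by_cases ha : a' = a
  · subst ha
    have hval : ∀ x : QVec n,
        Pauli a' b x (x + a') * Pauli a' b' (x + a') x =
          (Complex.I ^ dotN a' b * Complex.I ^ dotN a' b' * sgn b a') * sgn (b + b') x := by
      intro x
      rw [Pauli_pos rfl, Pauli_pos (by rw [add_assoc, qvec_add_self, add_zero]),
        sgn_add_right, sgn_add_left]
      ring
    rw [Finset.sum_congr rfl fun x _ => hval x, ← Finset.mul_sum, charSum]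
    by_cases hb : b' = b
    · subst hb
      rw [if_pos (qvec_add_self b'), if_pos ⟨rfl, rfl⟩, I_pow_mul_self]
      rw [show sgn b' a' = ((-1 : ℂ)) ^ dotN a' b' by unfold sgn; rw [dotN_comm],
        neg_one_pow_mul_self, one_mul]
    · rw [if_neg (fun h => hb (qvec_add_eq_zero_iff.mp h)), mul_zero,
        if_neg (fun h => hb h.2.symm)]
  · have hz : ∀ x : QVec n, Pauli a b x (x + a) * Pauli a' b' (x + a) x = 0 := by
      intro x
      have h0 : Pauli a' b' (x + a) x = 0 := by
        refine Pauli_zero_of fun h => ha ?_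
        exact (add_left_cancel h).symm
      rw [h0, mul_zero]
    rw [Finset.sum_congr rfl fun x _ => hz x, Finset.sum_const, smul_zero,
      if_neg (fun h => ha h.1.symm)]

lemma pairSum {n : ℕ} (x y z w : QVec n) :
    ∑ t : QVec n × QVec n, Pauli t.1 t.2 x y * Pauli t.1 t.2 z w =
      if x = w ∧ y = z then (2 ^ n : ℂ) else 0 := by
  rw [Fintype.sum_prod_type]
  have houter : (∑ a : QVec n, ∑ b : QVec n, Pauli a b x y * Pauli a b z w) =
      ∑ b : QVec n, Pauli (y + x) b x y * Pauli (y + x) b z w := by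
    refine Finset.sum_eq_single (y + x) (fun a _ hxa => ?_) (by simp)
    refine Finset.sum_eq_zero fun b _ => ?_
    have h0 : Pauli a b x y = 0 := by
      refine Pauli_zero_of fun h => hxa ?_
      rw [h, qvec_cancel]
    rw [h0, zero_mul]
  rw [houter]
  by_cases hz : z = w + (y + x)
  · have hterm : ∀ b : QVec n,
        Pauli (y + x) b x y * Pauli (y + x) b z w = sgn (x + w) b := by
      intro b
      rw [Pauli_pos (by rw [qvec_cancel] : x = y + (y + x)), Pauli_pos hz]
      have hC : Complex.I ^ dotN (y + x) b * Complex.I ^ dotN (y + x) b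
          = sgn b y * sgn b x := by
        rw [I_pow_mul_self,
          show ((-1 : ℂ)) ^ dotN (y + x) b = sgn (y + x) b from rfl, sgn_comm, sgn_add_right]
      calc (Complex.I ^ dotN (y + x) b * sgn b y) * (Complex.I ^ dotN (y + x) b * sgn b w)
          = (Complex.I ^ dotN (y + x) b * Complex.I ^ dotN (y + x) b) * sgn b y * sgn b w := by
            ring
        _ = sgn b x * sgn b w * (sgn b y * sgn b y) := by rw [hC]; ring
        _ = sgn (x + w) b := by
            rw [sgn_mul_self, mul_one, ← sgn_add_right, sgn_comm]
    rw [Finset.sum_congr rfl fun b _ => hterm b,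
      show (∑ b : QVec n, sgn (x + w) b) = if (x + w : QVec n) = 0 then (2 ^ n : ℂ) else 0
        from charSum _]
    by_cases hw : w = x
    · subst hw
      have hyz : y = z := by rw [hz, add_comm y w, ← add_assoc, qvec_add_self, zero_add]
      rw [if_pos (qvec_add_self w), if_pos ⟨rfl, hyz⟩]
    · rw [if_neg (fun h => hw (qvec_add_eq_zero_iff.mp h)), if_neg (fun h => hw h.1.symm)]
  · have hterm : ∀ b : QVec n, Pauli (y + x) b x y * Pauli (y + x) b z w = 0 := by
      intro b
      rw [Pauli_zero_of hz, mul_zero]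
    rw [Finset.sum_congr rfl fun b _ => hterm b, Finset.sum_const, smul_zero, if_neg]
    rintro ⟨h1, h2⟩
    exact hz (by rw [← h1, ← h2, add_comm y x, qvec_cancel])



lemma two_pow_ne (n : ℕ) : ((2 : ℂ) ^ n) ≠ 0 := pow_ne_zero _ two_ne_zero

lemma trace_mul_pair {n : ℕ} (M N : Matrix (QVec n) (QVec n) ℂ) :
    Matrix.trace (M * N) = ∑ p : QVec n × QVec n, M p.1 p.2 * N p.2 p.1 := by
  rw [trace_mul_entry]
  exact (Fintype.sum_prod_type (f := fun p : QVec n × QVec n => M p.1 p.2 * N p.2 p.1)).symm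

lemma tracePPpair {n : ℕ} (r s : QVec n × QVec n) :
    Matrix.trace (Pauli r.1 r.2 * Pauli s.1 s.2) = if r = s then (2 ^ n : ℂ) else 0 := by
  rw [tracePP]
  congr 1
  rw [Prod.ext_iff]

lemma chan_one {n : ℕ} (r s : QVec n × QVec n) :
    chan (1 : Matrix (QVec n) (QVec n) ℂ) r s = if r = s then 1 else 0 := by
  unfold chan
  simp only [conjTranspose_one, Matrix.mul_one]
  rw [tracePPpair]
  by_cases h : r = s
  · rw [if_pos h, if_pos h]
    field_simp
  · rw [if_neg h, if_neg h, mul_zero]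

lemma sum_trace {n : ℕ} (A B : Matrix (QVec n) (QVec n) ℂ) :
    ∑ t : QVec n × QVec n,
        Matrix.trace (A * Pauli t.1 t.2) * Matrix.trace (Pauli t.1 t.2 * B) =
      (2 ^ n : ℂ) * Matrix.trace (A * B) := by
  have hstep : ∀ t : QVec n × QVec n,
      Matrix.trace (A * Pauli t.1 t.2) * Matrix.trace (Pauli t.1 t.2 * B) =
        ∑ p : QVec n × QVec n, ∑ q : QVec n × QVec n,
          (A p.1 p.2 * Pauli t.1 t.2 p.2 p.1) * (Pauli t.1 t.2 q.1 q.2 * B q.2 q.1) := by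
    intro t
    rw [trace_mul_pair, trace_mul_pair, Finset.sum_mul_sum]
  rw [Finset.sum_congr rfl fun t _ => hstep t]
  rw [Finset.sum_comm]
  have hinner : ∀ p : QVec n × QVec n,
      (∑ t : QVec n × QVec n, ∑ q : QVec n × QVec n,
        (A p.1 p.2 * Pauli t.1 t.2 p.2 p.1) * (Pauli t.1 t.2 q.1 q.2 * B q.2 q.1)) =
      A p.1 p.2 * B p.2 p.1 * (2 ^ n : ℂ) := by
    intro p
    rw [Finset.sum_comm]
    have hq : ∀ q : QVec n × QVec n,
        (∑ t : QVec n × QVec n,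
          (A p.1 p.2 * Pauli t.1 t.2 p.2 p.1) * (Pauli t.1 t.2 q.1 q.2 * B q.2 q.1)) =
        if q = p then A p.1 p.2 * B q.2 q.1 * (2 ^ n : ℂ) else 0 := by
      intro q
      have : (∑ t : QVec n × QVec n,
          (A p.1 p.2 * Pauli t.1 t.2 p.2 p.1) * (Pauli t.1 t.2 q.1 q.2 * B q.2 q.1)) =
          (A p.1 p.2 * B q.2 q.1) *
            ∑ t : QVec n × QVec n, Pauli t.1 t.2 p.2 p.1 * Pauli t.1 t.2 q.1 q.2 := by
        rw [Finset.mul_sum]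
        exact Finset.sum_congr rfl fun t _ => by ring
      rw [this, pairSum]
      by_cases h : q = p
      · subst h
        rw [if_pos ⟨rfl, rfl⟩, if_pos rfl]
      · rw [if_neg, if_neg h, mul_zero]
        rintro ⟨h1, h2⟩
        exact h (Prod.ext h2.symm h1.symm)
    rw [Finset.sum_congr rfl fun q _ => hq q, Finset.sum_ite_eq' Finset.univ p]
    simp
  rw [Finset.sum_congr rfl fun p _ => hinner p, ← Finset.sum_mul, mul_comm]
  congr 1
  rw [trace_mul_pair]

lemma chan_mul {n : ℕ} (U V : Matrix (QVec n) (QVec n) ℂ) (r s : QVec n × QVec n) :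
    chan (U * V) r s = ∑ t : QVec n × QVec n, chan U r t * chan V t s := by
  unfold chan
  have h1 : ∀ t : QVec n × QVec n,
      Matrix.trace (Pauli r.1 r.2 * U * Pauli t.1 t.2 * Uᴴ) =
        Matrix.trace ((Uᴴ * Pauli r.1 r.2 * U) * Pauli t.1 t.2) := by
    intro t
    rw [Matrix.trace_mul_comm]
    simp only [← mul_assoc]
  have h2 : ∀ t : QVec n × QVec n,
      Matrix.trace (Pauli t.1 t.2 * V * Pauli s.1 s.2 * Vᴴ) =
        Matrix.trace (Pauli t.1 t.2 * (V * Pauli s.1 s.2 * Vᴴ)) := by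
    intro t
    simp only [← mul_assoc]
  have hsum : (∑ t : QVec n × QVec n,
      ((1 : ℂ) / 2 ^ n * Matrix.trace (Pauli r.1 r.2 * U * Pauli t.1 t.2 * Uᴴ)) *
      ((1 : ℂ) / 2 ^ n * Matrix.trace (Pauli t.1 t.2 * V * Pauli s.1 s.2 * Vᴴ))) =
      ((1 : ℂ) / 2 ^ n) * ((1 : ℂ) / 2 ^ n) *
        ∑ t : QVec n × QVec n,
          Matrix.trace ((Uᴴ * Pauli r.1 r.2 * U) * Pauli t.1 t.2) *
          Matrix.trace (Pauli t.1 t.2 * (V * Pauli s.1 s.2 * Vᴴ)) := by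
    rw [Finset.mul_sum]
    exact Finset.sum_congr rfl fun t _ => by rw [h1 t, h2 t]; ring
  rw [hsum, sum_trace]
  have htr : Matrix.trace ((Uᴴ * Pauli r.1 r.2 * U) * (V * Pauli s.1 s.2 * Vᴴ)) =
      Matrix.trace (Pauli r.1 r.2 * (U * V) * Pauli s.1 s.2 * (U * V)ᴴ) := by
    rw [mul_assoc Uᴴ (Pauli r.1 r.2) U, mul_assoc, Matrix.trace_mul_comm, conjTranspose_mul]
    simp only [← mul_assoc]
  rw [htr]
  have h2n := two_pow_ne n
  field_simp
lemma chan_star {n : ℕ} (U : Matrix (QVec n) (QVec n) ℂ) (r s : QVec n × QVec n) :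
    chan (Uᴴ) r s = chan U s r := by
  unfold chan
  have h : Matrix.trace (Pauli r.1 r.2 * Uᴴ * Pauli s.1 s.2 * Uᴴᴴ) =
      Matrix.trace (Pauli s.1 s.2 * U * Pauli r.1 r.2 * Uᴴ) := by
    rw [conjTranspose_conjTranspose, Matrix.trace_mul_comm,
      show U * (Pauli r.1 r.2 * Uᴴ * Pauli s.1 s.2) = (U * Pauli r.1 r.2 * Uᴴ) * Pauli s.1 s.2 by
        simp only [← mul_assoc],
      Matrix.trace_mul_comm]
    simp only [← mul_assoc]
  rw [h]



-- ω facts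
noncomputable def ω : ℂ := Complex.exp (Complex.I * Real.pi / 4)

lemma homega : ω = sq2 / 2 + sq2 / 2 * Complex.I := by
  unfold ω sq2
  have h1 : Complex.I * (Real.pi : ℂ) / 4 = ((Real.pi / 4 : ℝ) : ℂ) * Complex.I := by
    push_cast; ring
  rw [h1, Complex.exp_mul_I, ← Complex.ofReal_cos, ← Complex.ofReal_sin,
    Real.cos_pi_div_four, Real.sin_pi_div_four]
  push_cast; ring

lemma homega_star : star ω = sq2 / 2 - sq2 / 2 * Complex.I := by
  rw [homega]
  simp only [Complex.star_def, map_add, _root_.map_mul, map_div₀, Complex.conj_I,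
    Complex.conj_ofReal, sq2, map_ofNat]
  ring

lemma homega_mul : ω * star ω = 1 := by
  rw [homega_star, homega]
  have h2 := sq2_mul_self
  have hI := Complex.I_sq
  linear_combination ((1 - Complex.I ^ 2) / 4) * h2 - (1 / 2 : ℂ) * hI

lemma homega_add : ω + star ω = sq2 := by rw [homega_star, homega]; ring
lemma homega_sub : ω - star ω = sq2 * Complex.I := by rw [homega_star, homega]; ring

lemma phase1 (S : ℕ) : (Complex.I) ^ S * Complex.I ^ (S + 1) * (-1 : ℂ) ^ S = Complex.I := by
  calc (Complex.I) ^ S * Complex.I ^ (S + 1) * (-1 : ℂ) ^ S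
      = (Complex.I ^ S * Complex.I ^ S) * (-1 : ℂ) ^ S * Complex.I := by rw [pow_succ]; ring
    _ = ((-1 : ℂ) ^ S * (-1 : ℂ) ^ S) * Complex.I := by rw [I_pow_mul_self]
    _ = Complex.I := by rw [neg_one_pow_mul_self, one_mul]

lemma phase2 (S : ℕ) : (Complex.I) ^ (S + 1) * Complex.I ^ S * (-1 : ℂ) ^ (S + 1) = -Complex.I := by
  calc (Complex.I) ^ (S + 1) * Complex.I ^ S * (-1 : ℂ) ^ (S + 1)
      = (Complex.I ^ S * Complex.I ^ S) * ((-1 : ℂ) ^ S) * (-1) * Complex.I := by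
        rw [pow_succ, pow_succ]; ring
    _ = ((-1 : ℂ) ^ S * (-1 : ℂ) ^ S) * (-1) * Complex.I := by rw [I_pow_mul_self]
    _ = -Complex.I := by rw [neg_one_pow_mul_self]; ring

lemma trace_PdPd {n : ℕ} (A B : Matrix (QVec n) (QVec n) ℂ) (u w : QVec n → ℂ) :
    Matrix.trace (A * Matrix.diagonal u * B * Matrix.diagonal w) =
      ∑ x : QVec n, ∑ y : QVec n, A x y * u y * B y x * w x := by
  rw [mul_assoc (A * Matrix.diagonal u) B (Matrix.diagonal w), trace_mul_entry]
  refine Finset.sum_congr rfl fun x _ => Finset.sum_congr rfl fun y _ => ?_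
  rw [Matrix.mul_diagonal, Matrix.mul_diagonal]
  ring

noncomputable def tfun (n : ℕ) (h : 0 < n) : QVec n → ℂ :=
  fun x => if x ⟨0, h⟩ = 1 then ω else 1

noncomputable def e0v (n : ℕ) (h : 0 < n) : QVec n := Pi.single ⟨0, h⟩ 1

lemma e0v_same {n : ℕ} (h : 0 < n) : e0v n h ⟨0, h⟩ = 1 := Pi.single_eq_same _ _

lemma e0v_ne {n : ℕ} (h : 0 < n) {j : Fin n} (hj : j ≠ ⟨0, h⟩) : e0v n h j = 0 :=
  Pi.single_eq_of_ne hj 1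

lemma e0v_ne_zero {n : ℕ} (h : 0 < n) : e0v n h ≠ 0 := by
  intro hh
  have h2 := congrFun hh ⟨0, h⟩
  rw [e0v_same h] at h2
  exact one_ne_zero h2

lemma dotN_e0v {n : ℕ} (h : 0 < n) (x : QVec n) : dotN (e0v n h) x = (x ⟨0, h⟩).val := by
  unfold dotN e0v
  rw [Finset.sum_eq_single (⟨0, h⟩ : Fin n) (fun j _ hj => by rw [Pi.single_eq_of_ne hj]; simp)
    (by simp)]
  rw [Pi.single_eq_same, show ((1 : ZMod 2)).val = 1 from rfl, one_mul]

lemma chan_T {n : ℕ} (r s : QVec n × QVec n) : inD2 (chan (Tgate n) r s) := by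
  obtain ⟨a, b⟩ := r
  obtain ⟨a', b'⟩ := s
  by_cases hn : 0 < n
  case neg =>
    have hT : Tgate n = 1 := by
      unfold Tgate
      simp [hn]
    rw [hT, chan_one]
    by_cases h : (a, b) = (a', b')
    · rw [if_pos h]; exact inD2_one
    · rw [if_neg h]; exact inD2_zero
  case pos =>
  have h2n := two_pow_ne n
  have hT : Tgate n = Matrix.diagonal (tfun n hn) := by
    unfold Tgate tfun ω
    simp only [dif_pos hn]
  have hchan : chan (Tgate n) (a, b) (a', b') =
      ((1 : ℂ) / 2 ^ n) * ∑ x : QVec n, ∑ y : QVec n,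
        Pauli a b x y * tfun n hn y * Pauli a' b' y x * star (tfun n hn x) := by
    unfold chan
    rw [hT, Matrix.diagonal_conjTranspose, trace_PdPd]
    rfl
  have hcol : ∀ x : QVec n,
      (∑ y : QVec n, Pauli a b x y * tfun n hn y * Pauli a' b' y x * star (tfun n hn x)) =
        Pauli a b x (x + a') * tfun n hn (x + a') * Pauli a' b' (x + a') x * star (tfun n hn x) := by
    intro x
    refine Finset.sum_eq_single (x + a') (fun y _ hy => ?_) (by simp)
    rw [Pauli_zero_of (fun h => hy h)]
    ring
  rw [hchan, Finset.sum_congr rfl fun x _ => hcol x]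
  by_cases ha : a' = a
  case neg =>
    have hz : ∀ x : QVec n,
        Pauli a b x (x + a') * tfun n hn (x + a') * Pauli a' b' (x + a') x * star (tfun n hn x)
          = 0 := by
      intro x
      have h0 : Pauli a b x (x + a') = 0 := by
        refine Pauli_zero_of fun h => ha ?_
        rw [add_assoc] at h
        exact (qvec_add_eq_zero_iff.mp (left_eq_add.mp h)).symm
      rw [h0]
      ring
    rw [Finset.sum_congr rfl fun x _ => hz x, Finset.sum_const, smul_zero, mul_zero]
    exact inD2_zero
  case pos =>
  subst ha
  have hP1 : ∀ x : QVec n, Pauli a' b x (x + a') = Complex.I ^ dotN a' b * sgn b (x + a') :=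
    fun x => Pauli_pos (by rw [add_assoc, qvec_add_self, add_zero])
  have hP2 : ∀ x : QVec n, Pauli a' b' (x + a') x = Complex.I ^ dotN a' b' * sgn b' x :=
    fun x => Pauli_pos rfl
  rcases zmod2_cases (a' (⟨0, hn⟩ : Fin n)) with h0 | h1
  -- CASE a' (⟨0, hn⟩ : Fin n) = 0 : T acts trivially on this Pauli
  · have htf1 : ∀ x : QVec n, tfun n hn (x + a') * star (tfun n hn x) = 1 := by
      intro x
      have hxx : (x + a') (⟨0, hn⟩ : Fin n) = x (⟨0, hn⟩ : Fin n) := by rw [Pi.add_apply, h0, add_zero]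
      unfold tfun
      rw [hxx]
      rcases zmod2_cases (x (⟨0, hn⟩ : Fin n)) with h | h
      · rw [if_neg (by rw [h]; decide)]
        simp
      · rw [if_pos h]
        exact homega_mul
    have hterm : ∀ x : QVec n,
        Pauli a' b x (x + a') * tfun n hn (x + a') * Pauli a' b' (x + a') x * star (tfun n hn x)
          = (Complex.I ^ dotN a' b * Complex.I ^ dotN a' b' * sgn b a') * sgn (b + b') x := by
      intro x
      rw [hP1 x, hP2 x, sgn_add_right,
        show Complex.I ^ dotN a' b * (sgn b x * sgn b a') * tfun n hn (x + a') *
            (Complex.I ^ dotN a' b' * sgn b' x) * star (tfun n hn x)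
          = (Complex.I ^ dotN a' b * Complex.I ^ dotN a' b' * sgn b a') *
              (sgn b x * sgn b' x) * (tfun n hn (x + a') * star (tfun n hn x)) from by ring,
        htf1 x, mul_one, ← sgn_add_left]
    rw [Finset.sum_congr rfl fun x _ => hterm x, ← Finset.mul_sum, charSum]
    by_cases hb : b + b' = 0
    · have hb' : b' = b := qvec_add_eq_zero_iff.mp hb
      subst hb'
      rw [if_pos hb, I_pow_mul_self,
        show sgn b' a' = ((-1 : ℂ)) ^ dotN a' b' from by unfold sgn; rw [dotN_comm],
        neg_one_pow_mul_self, one_mul]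
      rw [show (1 : ℂ) / 2 ^ n * 2 ^ n = 1 from by field_simp]
      exact inD2_one
    · rw [if_neg hb, mul_zero, mul_zero]
      exact inD2_zero
  -- CASE a' (⟨0, hn⟩ : Fin n) = 1 : the interesting case
  · have hdote : ∀ x : QVec n, dotN (e0v n hn) x = (x (⟨0, hn⟩ : Fin n)).val :=
      dotN_e0v hn
    have htfω : ∀ x : QVec n, tfun n hn (x + a') * star (tfun n hn x)
        = sq2 / 2 + sq2 / 2 * Complex.I * sgn (e0v n hn) x := by
      intro x
      have hsgn : sgn (e0v n hn) x = (-1 : ℂ) ^ (x (⟨0, hn⟩ : Fin n)).val := by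
        unfold sgn; rw [hdote x]
      unfold tfun
      have hxx : (x + a') (⟨0, hn⟩ : Fin n) = x (⟨0, hn⟩ : Fin n) + 1 := by rw [Pi.add_apply, h1]
      rcases zmod2_cases (x (⟨0, hn⟩ : Fin n)) with h | h
      · rw [if_pos (by rw [hxx, h]; decide), if_neg (by rw [h]; decide)]
        rw [hsgn, h, star_one, mul_one]
        rw [show ((0 : ZMod 2)).val = 0 from rfl, pow_zero, mul_one]
        exact homega
      · rw [if_neg (by rw [hxx, h]; decide), if_pos h, one_mul]
        rw [hsgn, h]
        rw [show ((1 : ZMod 2)).val = 1 from rfl, pow_one]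
        rw [homega_star]
        ring
    have hterm : ∀ x : QVec n,
        Pauli a' b x (x + a') * tfun n hn (x + a') * Pauli a' b' (x + a') x * star (tfun n hn x)
          = (Complex.I ^ dotN a' b * Complex.I ^ dotN a' b' * sgn b a') *
              (sq2 / 2 * sgn (b + b') x + sq2 / 2 * Complex.I * sgn (b + b' + e0v n hn) x) := by
      intro x
      rw [hP1 x, hP2 x, sgn_add_right,
        show Complex.I ^ dotN a' b * (sgn b x * sgn b a') * tfun n hn (x + a') *
            (Complex.I ^ dotN a' b' * sgn b' x) * star (tfun n hn x)
          = (Complex.I ^ dotN a' b * Complex.I ^ dotN a' b' * sgn b a') *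
              (sgn b x * sgn b' x) * (tfun n hn (x + a') * star (tfun n hn x)) from by ring,
        htfω x, ← sgn_add_left, sgn_add_left (b + b') (e0v n hn) x]
      ring
    rw [Finset.sum_congr rfl fun x _ => hterm x, ← Finset.mul_sum]
    rw [show (∑ x : QVec n, (sq2 / 2 * sgn (b + b') x
          + sq2 / 2 * Complex.I * sgn (b + b' + e0v n hn) x))
        = sq2 / 2 * (∑ x : QVec n, sgn (b + b') x)
          + sq2 / 2 * Complex.I * (∑ x : QVec n, sgn (b + b' + e0v n hn) x) from by
      rw [Finset.sum_add_distrib, Finset.mul_sum, Finset.mul_sum],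
      charSum, charSum]
    have he0ne : (e0v n hn) ≠ 0 := e0v_ne_zero hn
    by_cases hb : b + b' = 0
    · rw [if_pos hb, if_neg (by rw [hb, zero_add]; exact he0ne), mul_zero, add_zero]
      have hb' : b' = b := qvec_add_eq_zero_iff.mp hb
      subst hb'
      rw [I_pow_mul_self,
        show sgn b' a' = ((-1 : ℂ)) ^ dotN a' b' from by unfold sgn; rw [dotN_comm],
        neg_one_pow_mul_self, one_mul]
      rw [show (1 : ℂ) / 2 ^ n * (sq2 / 2 * 2 ^ n) = sq2 / 2 from by field_simp]
      exact inD2_sqrt2_div_two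
    · rw [if_neg hb, mul_zero, zero_add]
      by_cases hb2 : b + b' + e0v n hn = 0
      · rw [if_pos hb2]
        have hbe : b' = b + e0v n hn := by
          have h3 : e0v n hn = b + b' := qvec_add_eq_zero_iff.mp hb2
          rw [h3, qvec_cancel]
        -- split the dot products at (⟨0, hn⟩ : Fin n)
        have hsplit : ∀ c : QVec n,
            dotN a' c = (∑ i ∈ Finset.univ.erase (⟨0, hn⟩ : Fin n), (a' i).val * (c i).val) + (c (⟨0, hn⟩ : Fin n)).val := by
          intro c
          unfold dotN
          rw [← Finset.sum_erase_add _ _ (Finset.mem_univ (⟨0, hn⟩ : Fin n)), h1,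
            show ((1 : ZMod 2)).val = 1 from rfl, one_mul]
        set S : ℕ := ∑ i ∈ Finset.univ.erase (⟨0, hn⟩ : Fin n), (a' i).val * (b i).val with hSdef
        have hS' : (∑ i ∈ Finset.univ.erase (⟨0, hn⟩ : Fin n), (a' i).val * (b' i).val) = S := by
          rw [hSdef]
          refine Finset.sum_congr rfl fun i hi => ?_
          have hine : i ≠ (⟨0, hn⟩ : Fin n) := (Finset.mem_erase.mp hi).1
          rw [hbe, Pi.add_apply, e0v_ne hn hine, add_zero]
        have hsgnba : sgn b a' = ((-1 : ℂ)) ^ dotN a' b := by unfold sgn; rw [dotN_comm]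
        rcases zmod2_cases (b (⟨0, hn⟩ : Fin n)) with hv | hv
        · have hv' : b' (⟨0, hn⟩ : Fin n) = 1 := by
            rw [hbe, Pi.add_apply, hv, e0v_same hn]
            decide
          rw [hsgnba, hsplit b, hsplit b', hS', hv, hv']
          rw [show ((0 : ZMod 2)).val = 0 from rfl, show ((1 : ZMod 2)).val = 1 from rfl,
            add_zero, phase1 S]
          rw [show (1 : ℂ) / 2 ^ n * (Complex.I * (sq2 / 2 * Complex.I * 2 ^ n))
              = -(sq2 / 2) from by
            rw [show Complex.I * (sq2 / 2 * Complex.I * (2 : ℂ) ^ n)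
                = Complex.I * Complex.I * (sq2 / 2) * 2 ^ n from by ring, Complex.I_mul_I]
            field_simp]
          exact inD2_neg_sqrt2_div_two
        · have hv' : b' (⟨0, hn⟩ : Fin n) = 0 := by
            rw [hbe, Pi.add_apply, hv, e0v_same hn]
            decide
          rw [hsgnba, hsplit b, hsplit b', hS', hv, hv']
          rw [show ((0 : ZMod 2)).val = 0 from rfl, show ((1 : ZMod 2)).val = 1 from rfl,
            add_zero, phase2 S]
          rw [show (1 : ℂ) / 2 ^ n * (-Complex.I * (sq2 / 2 * Complex.I * 2 ^ n))
              = sq2 / 2 from by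
            rw [show -Complex.I * (sq2 / 2 * Complex.I * (2 : ℂ) ^ n)
                = -(Complex.I * Complex.I) * (sq2 / 2) * 2 ^ n from by ring, Complex.I_mul_I]
            field_simp]
          exact inD2_sqrt2_div_two
      · rw [if_neg hb2, mul_zero, mul_zero, mul_zero]
        exact inD2_zero

lemma chan_clifford {n : ℕ} {C : Matrix (QVec n) (QVec n) ℂ} (hC : IsClifford C)
    (r s : QVec n × QVec n) : inD2 (chan C r s) := by
  obtain ⟨a', b', ε, hε, heq⟩ := hC.2 s.1 s.2
  unfold chan
  have h1 : Pauli r.1 r.2 * C * Pauli s.1 s.2 * Cᴴ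
      = Pauli r.1 r.2 * (C * Pauli s.1 s.2 * Cᴴ) := by
    simp only [mul_assoc]
  rw [h1, heq, mul_smul_comm, Matrix.trace_smul, tracePP, smul_eq_mul]
  by_cases hrs : r.1 = a' ∧ r.2 = b'
  · rw [if_pos hrs, show (1 : ℂ) / 2 ^ n * (ε * 2 ^ n) = ε from by
      have := two_pow_ne n; field_simp]
    simpa using inD2_smul_pm hε inD2_one
  · rw [if_neg hrs, mul_zero, mul_zero]
    exact inD2_zero

/-- For every unitary `U` in the Clifford+T group, every entry of `Û` lies in
`ℤ[1/√2]`: it can be written as `(a + b√2)/√2^k` with `a, b ∈ ℤ`, `k ∈ ℕ`. -/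
theorem chan_cliffordT_ring (n : ℕ) (U : Matrix.unitaryGroup (QVec n) ℂ)
    (hU : U ∈ CliffordTGroup n) (r s : QVec n × QVec n) :
    ∃ (a b : ℤ) (k : ℕ),
      chan (U : Matrix (QVec n) (QVec n) ℂ) r s =
        ((a : ℂ) + (b : ℂ) * ((Real.sqrt 2 : ℝ) : ℂ)) / ((Real.sqrt 2 : ℝ) : ℂ) ^ k := by
  refine inD2_goal ?_
  unfold CliffordTGroup at hU
  refine Subgroup.closure_induction
    (p := fun (u : Matrix.unitaryGroup (QVec n) ℂ) (_ : u ∈ Subgroup.closure {u : Matrix.unitaryGroup (QVec n) ℂ | IsClifford (u : Matrix (QVec n) (QVec n) ℂ) ∨ (u : Matrix (QVec n) (QVec n) ℂ) = Tgate n}) => ∀ r s : QVec n × QVec n,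
      inD2 (chan (u : Matrix (QVec n) (QVec n) ℂ) r s)) ?_ ?_ ?_ ?_ hU r s
  · intro x hx
    rcases hx with h | h
    · exact fun r s => chan_clifford h r s
    · intro r s
      rw [h]
      exact chan_T r s
  · intro r s
    rw [show ((1 : Matrix.unitaryGroup (QVec n) ℂ) : Matrix (QVec n) (QVec n) ℂ) = 1 from rfl,
      chan_one]
    by_cases h : r = s
    · rw [if_pos h]; exact inD2_one
    · rw [if_neg h]; exact inD2_zero
  · intro x y _ _ ihx ihy r s
    rw [show ((x * y : Matrix.unitaryGroup (QVec n) ℂ) : Matrix (QVec n) (QVec n) ℂ)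
        = (x : Matrix (QVec n) (QVec n) ℂ) * (y : Matrix (QVec n) (QVec n) ℂ) from rfl,
      chan_mul]
    exact inD2_sum _ _ fun t _ => inD2_mul (ihx r t) (ihy t s)
  · intro x _ ih r s
    rw [show ((x⁻¹ : Matrix.unitaryGroup (QVec n) ℂ) : Matrix (QVec n) (QVec n) ℂ)
        = (x : Matrix (QVec n) (QVec n) ℂ)ᴴ from by
      rw [Matrix.UnitaryGroup.inv_apply, Matrix.star_eq_conjTranspose],
      chan_star]
    exact ih s r
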